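/- Let d ∈ {1,2,3}, let ν ≥ 1/2, let 0 < ℓ ≤ (log 2)^{-1}√(ν/(2d)), let 0 < h ≤ (1 + √(8ν)ℓ)^{-1}, and let ε > 0. If m ∈ ℕ satisfies m ≥ (d·5^{d−1}/(π^{d/2} ε))^{1/(2ν)} · 1.6 √ν / (π h ℓ), then the Matérn truncation error satisfies | h^d Σ_{j ∈ ℤ^d, j ∉ J_m} Ĉ_{ν,ℓ}(jh) e^{2πih⟨j,x⟩} | ≤ ε/2 for all x ∈ ℝ^d. -/

import Mathlib

/-!
Dropping `2ν` from the base gives the algebraic decay `Ĉ(hj) ≤ c · (2πℓh ‖j‖_∞)^{-(2ν+d)}`.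
The lattice shell `‖j‖_∞ = n + 1` has `(2n+3)^d - (2n+1)^d ≤ 2d·3^{d-1}(n+1)^{d-1}` points, and
`2ν (n+1)^{-2ν-1} ≤ n^{-2ν} - (n+1)^{-2ν}` by Bernoulli, so the tail outside `J_m` telescopes to
at most `(2d·3^{d-1}/2ν) m^{-2ν}`. The lower bound on `m` turns this into `ε/2`, because
`(2ν)^ν (3.2√ν)^{-2ν} = (25/128)^ν ≤ √π/4` for `ν ≥ 1/2` and, for `d ≤ 3`,
`√π Γ(ν + d/2) ≤ (2ν)^{d/2+1} Γ(ν)`, the case `d = 1` by log-convexity of `Γ`.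
-/

/-- The Matérn spectral density
`Ĉ_{ν,ℓ}(ξ) = ĉ_{d,ν} (ℓ/√(2ν))^d (2ν + |2πℓξ|²)^{−ν−d/2}` with
`ĉ_{d,ν} = 2^d π^{d/2} (2ν)^ν Γ(ν+d/2)/Γ(ν)`. -/
noncomputable def Chat (d : ℕ) (ν ℓ : ℝ) (ξ : EuclideanSpace ℝ (Fin d)) : ℝ :=
  (2 ^ d * Real.pi ^ ((d : ℝ) / 2) * (2 * ν) ^ ν *
      Real.Gamma (ν + (d : ℝ) / 2) / Real.Gamma ν) *
    (ℓ / Real.sqrt (2 * ν)) ^ d *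
      (2 * ν + (2 * Real.pi * ℓ) ^ 2 * ‖ξ‖ ^ 2) ^ (-(ν + (d : ℝ) / 2))

/-- The lattice point `c·n ∈ ℝ^d` for `n ∈ ℤ^d` and a scalar `c`. -/
noncomputable def lpt (d : ℕ) (c : ℝ) (n : Fin d → ℤ) : EuclideanSpace ℝ (Fin d) :=
  (EuclideanSpace.equiv (Fin d) ℝ).symm (fun i => c * (n i : ℝ))

/-- The cube `J_m = {−m,…,m}^d ⊂ ℤ^d`. -/
noncomputable def Jm (d m : ℕ) : Finset (Fin d → ℤ) := Finset.Icc (fun _ => -(m : ℤ)) (fun _ => (m : ℤ))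

open Real Finset

def supNorm {d : ℕ} (j : Fin d → ℤ) : ℕ := univ.sup fun i => (j i).natAbs

lemma mem_Jm_iff {d m : ℕ} {j : Fin d → ℤ} : j ∈ Jm d m ↔ supNorm j ≤ m := by
  simp only [Jm, mem_Icc, supNorm, Finset.sup_le_iff, mem_univ, true_implies, Pi.le_def,
    ← forall_and]
  exact forall_congr' fun i => by omega

lemma Jm_mono (d : ℕ) : Monotone (Jm d) :=
  fun _ _ hmn _ hj => mem_Jm_iff.2 ((mem_Jm_iff.1 hj).trans hmn)

lemma card_Jm (d m : ℕ) : #(Jm d m) = (2 * m + 1) ^ d := by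
  simp only [Jm, Pi.card_Icc, Int.card_Icc, prod_const, card_univ, Fintype.card_fin]
  congr 1
  omega

lemma mul_supNorm_le_norm_lpt {d : ℕ} {h : ℝ} (hh : 0 ≤ h) (j : Fin d → ℤ) :
    h * supNorm j ≤ ‖lpt d h j‖ := by
  unfold supNorm
  refine sup_induction (p := fun k : ℕ => h * k ≤ ‖lpt d h j‖) (by simp) ?_ ?_
  · intro a ha b hb
    simpa only [Nat.cast_max, mul_max_of_nonneg _ _ hh] using max_le ha hb
  · intro i _
    calc h * ((j i).natAbs : ℝ) = ‖lpt d h j i‖ := by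
          simp [lpt, abs_of_nonneg hh, Nat.cast_natAbs]
      _ ≤ ‖lpt d h j‖ := PiLp.norm_apply_le _ i

lemma Nat.add_two_pow_succ_le (a d : ℕ) :
    (a + 2) ^ (d + 1) ≤ a ^ (d + 1) + 2 * (d + 1) * (a + 2) ^ d := by
  induction d with
  | zero => simp
  | succ d ih =>
    have hmono : (a + 2) ^ d * a ≤ (a + 2) ^ (d + 1) := by rw [pow_succ]; gcongr; omega
    calc (a + 2) ^ (d + 1 + 1) = (a + 2) ^ (d + 1) * a + 2 * (a + 2) ^ (d + 1) := by ring
      _ ≤ (a ^ (d + 1) + 2 * (d + 1) * (a + 2) ^ d) * a + 2 * (a + 2) ^ (d + 1) := by gcongr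
      _ = a ^ (d + 1 + 1) + 2 * (d + 1) * ((a + 2) ^ d * a) + 2 * (a + 2) ^ (d + 1) := by ring
      _ ≤ a ^ (d + 1 + 1) + 2 * (d + 1) * (a + 2) ^ (d + 1) + 2 * (a + 2) ^ (d + 1) := by gcongr
      _ = a ^ (d + 1 + 1) + 2 * (d + 1 + 1) * (a + 2) ^ (d + 1) := by ring

lemma card_Jm_succ_sdiff_le (d n : ℕ) :
    #(Jm d (n + 1) \ Jm d n) ≤ 2 * d * 3 ^ (d - 1) * (n + 1) ^ (d - 1) := by
  rw [card_sdiff_of_subset (Jm_mono d n.le_succ), card_Jm, card_Jm]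
  rcases d with _ | d
  · simp
  have := Nat.add_two_pow_succ_le (2 * n + 1) d
  calc (2 * (n + 1) + 1) ^ (d + 1) - (2 * n + 1) ^ (d + 1) ≤ 2 * (d + 1) * (2 * n + 1 + 2) ^ d := by
        rw [show 2 * (n + 1) + 1 = 2 * n + 1 + 2 by ring]; omega
    _ ≤ 2 * (d + 1) * (3 * (n + 1)) ^ d := by gcongr; omega
    _ = 2 * (d + 1) * 3 ^ (d + 1 - 1) * (n + 1) ^ (d + 1 - 1) := by
        rw [Nat.add_sub_cancel, mul_pow]; ring

lemma mul_rpow_neg_succ_le_sub {s : ℝ} (hs : 1 ≤ s) {k : ℝ} (hk : 0 < k) :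
    s * (k + 1) ^ (-(s + 1)) ≤ k ^ (-s) - (k + 1) ^ (-s) := by
  have hk1 : 0 < k + 1 := by linarith
  set P := (k + 1) ^ (-s)
  have hP : 0 ≤ P := rpow_nonneg hk1.le _
  have bernoulli : 1 + s * k⁻¹ ≤ (1 + k⁻¹) ^ s :=
    one_add_mul_self_le_rpow_one_add (by linarith [inv_pos.2 hk]) hs
  have hkP : k ^ (-s) = P * (1 + k⁻¹) ^ s := by
    rw [show 1 + k⁻¹ = (k + 1) / k by field_simp, div_rpow hk1.le hk.le]
    simp only [P, rpow_neg hk1.le, rpow_neg hk.le]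
    field_simp
  have hsucc : (k + 1) ^ (-(s + 1)) = P * (k + 1)⁻¹ := by
    rw [neg_add, rpow_add hk1, rpow_neg_one]
  calc s * (k + 1) ^ (-(s + 1)) = P * (s * (k + 1)⁻¹) := by rw [hsucc]; ring
    _ ≤ P * (s * k⁻¹) := by gcongr; linarith
    _ ≤ P * ((1 + k⁻¹) ^ s - 1) := by gcongr; linarith
    _ = k ^ (-s) - (k + 1) ^ (-s) := by rw [hkP]; ring

lemma sum_Jm_succ_sdiff_rpow_le {d : ℕ} {s : ℝ} (hs : 1 ≤ s) {n : ℕ} (hn : 1 ≤ n) :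
    ∑ j ∈ Jm d (n + 1) \ Jm d n, (supNorm j : ℝ) ^ (-(s + d)) ≤
      2 * d * 3 ^ (d - 1) / s * ((n : ℝ) ^ (-s) - ((n : ℝ) + 1) ^ (-s)) := by
  have hn1 : (0 : ℝ) < n + 1 := by positivity
  have on_shell : ∀ j ∈ Jm d (n + 1) \ Jm d n, (supNorm j : ℝ) ^ (-(s + d)) =
      ((n : ℝ) + 1) ^ (-(s + d)) := by
    intro j hj
    rw [mem_sdiff, mem_Jm_iff, mem_Jm_iff] at hj
    rw [show supNorm j = n + 1 by omega, Nat.cast_succ]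
  have hcard : (#(Jm d (n + 1) \ Jm d n) : ℝ) ≤ 2 * d * 3 ^ (d - 1) * ((n : ℝ) + 1) ^ (d - 1) := by
    exact_mod_cast card_Jm_succ_sdiff_le d n
  have hexp : (d : ℝ) * ((n : ℝ) + 1) ^ (d - 1) * ((n : ℝ) + 1) ^ (-(s + d)) =
      d * ((n : ℝ) + 1) ^ (-(s + 1)) := by
    rcases d with _ | d
    · simp
    rw [mul_assoc, ← rpow_natCast, ← rpow_add hn1]
    push_cast
    ring_nf
  calc ∑ j ∈ Jm d (n + 1) \ Jm d n, (supNorm j : ℝ) ^ (-(s + d))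
      = #(Jm d (n + 1) \ Jm d n) * ((n : ℝ) + 1) ^ (-(s + d)) := by
        rw [sum_congr rfl on_shell, sum_const, nsmul_eq_mul]
    _ ≤ 2 * d * 3 ^ (d - 1) * ((n : ℝ) + 1) ^ (d - 1) * ((n : ℝ) + 1) ^ (-(s + d)) := by
        gcongr
    _ = 2 * 3 ^ (d - 1) * (d * ((n : ℝ) + 1) ^ (d - 1) * ((n : ℝ) + 1) ^ (-(s + d))) := by ring
    _ = 2 * d * 3 ^ (d - 1) / s * (s * ((n : ℝ) + 1) ^ (-(s + 1))) := by
        rw [hexp]; field_simp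
    _ ≤ 2 * d * 3 ^ (d - 1) / s * ((n : ℝ) ^ (-s) - ((n : ℝ) + 1) ^ (-s)) := by
        gcongr
        exact mul_rpow_neg_succ_le_sub hs (by exact_mod_cast hn)

lemma sum_Jm_sdiff_rpow_le {d : ℕ} {s : ℝ} (hs : 1 ≤ s) {m N : ℕ} (hm : 1 ≤ m) (hmN : m ≤ N) :
    ∑ j ∈ Jm d N \ Jm d m, (supNorm j : ℝ) ^ (-(s + d)) ≤
      2 * d * 3 ^ (d - 1) / s * ((m : ℝ) ^ (-s) - (N : ℝ) ^ (-s)) := by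
  induction N, hmN using Nat.le_induction with
  | base => simp
  | succ n hmn ih =>
    have hshell := sum_Jm_succ_sdiff_rpow_le (d := d) hs (hm.trans hmn)
    rw [sum_sdiff_eq_sub (Jm_mono d (hmn.trans n.le_succ))]
    rw [sum_sdiff_eq_sub (Jm_mono d hmn)] at ih
    rw [sum_sdiff_eq_sub (Jm_mono d n.le_succ)] at hshell
    push_cast
    linarith

lemma sum_rpow_supNorm_le {d m : ℕ} {s : ℝ} (hs : 1 ≤ s) (hm : 1 ≤ m)
    (F : Finset {j : Fin d → ℤ // j ∉ Jm d m}) :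
    ∑ j ∈ F, (supNorm j.1 : ℝ) ^ (-(s + d)) ≤ 2 * d * 3 ^ (d - 1) / s * (m : ℝ) ^ (-s) := by
  set N := max m (F.sup fun j => supNorm j.1)
  have hF : F.map (Function.Embedding.subtype _) ⊆ Jm d N \ Jm d m := by
    intro j hj
    obtain ⟨j, hjF, rfl⟩ := mem_map.1 hj
    exact mem_sdiff.2 ⟨mem_Jm_iff.2 ((le_sup (f := fun j => supNorm j.1) hjF).trans
      (le_max_right _ _)), j.2⟩
  calc ∑ j ∈ F, (supNorm j.1 : ℝ) ^ (-(s + d))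
      = ∑ j ∈ F.map (Function.Embedding.subtype _), (supNorm j : ℝ) ^ (-(s + d)) := by
        rw [sum_map]; rfl
    _ ≤ ∑ j ∈ Jm d N \ Jm d m, (supNorm j : ℝ) ^ (-(s + d)) :=
        sum_le_sum_of_subset_of_nonneg hF fun _ _ _ => rpow_nonneg (Nat.cast_nonneg _) _
    _ ≤ 2 * d * 3 ^ (d - 1) / s * ((m : ℝ) ^ (-s) - (N : ℝ) ^ (-s)) :=
        sum_Jm_sdiff_rpow_le hs hm (le_max_left _ _)
    _ ≤ 2 * d * 3 ^ (d - 1) / s * (m : ℝ) ^ (-s) := by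
        gcongr
        linarith [rpow_nonneg (Nat.cast_nonneg N) (-s)]

lemma summable_rpow_supNorm {d m : ℕ} {s : ℝ} (hs : 1 ≤ s) (hm : 1 ≤ m) :
    Summable fun j : {j : Fin d → ℤ // j ∉ Jm d m} => (supNorm j.1 : ℝ) ^ (-(s + d)) :=
  summable_of_sum_le (fun _ => rpow_nonneg (Nat.cast_nonneg _) _) (sum_rpow_supNorm_le hs hm)

lemma tsum_rpow_supNorm_le {d m : ℕ} {s : ℝ} (hs : 1 ≤ s) (hm : 1 ≤ m) :
    ∑' j : {j : Fin d → ℤ // j ∉ Jm d m}, (supNorm j.1 : ℝ) ^ (-(s + d)) ≤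
      2 * d * 3 ^ (d - 1) / s * (m : ℝ) ^ (-s) :=
  Real.tsum_le_of_sum_le (fun _ => rpow_nonneg (Nat.cast_nonneg _) _) (sum_rpow_supNorm_le hs hm)

noncomputable def maternCoeff (d : ℕ) (ν ℓ : ℝ) : ℝ :=
  (2 ^ d * π ^ ((d : ℝ) / 2) * (2 * ν) ^ ν * Gamma (ν + (d : ℝ) / 2) / Gamma ν) *
    (ℓ / √(2 * ν)) ^ d

section Matern

variable {d : ℕ} {ν ℓ : ℝ}

lemma Chat_eq_maternCoeff_mul (ξ : EuclideanSpace ℝ (Fin d)) :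
    Chat d ν ℓ ξ =
      maternCoeff d ν ℓ * (2 * ν + (2 * π * ℓ) ^ 2 * ‖ξ‖ ^ 2) ^ (-(ν + (d : ℝ) / 2)) :=
  rfl

lemma maternCoeff_nonneg (hν : 0 < ν) (hℓ : 0 ≤ ℓ) : 0 ≤ maternCoeff d ν ℓ := by
  have := Gamma_pos_of_pos hν
  have := Gamma_pos_of_pos (by positivity : 0 < ν + (d : ℝ) / 2)
  unfold maternCoeff
  positivity

lemma Chat_nonneg (hν : 0 < ν) (hℓ : 0 ≤ ℓ) (ξ : EuclideanSpace ℝ (Fin d)) :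
    0 ≤ Chat d ν ℓ ξ := by
  rw [Chat_eq_maternCoeff_mul]
  exact mul_nonneg (maternCoeff_nonneg hν hℓ) (rpow_nonneg (by positivity) _)

lemma Chat_le_of_le_norm (hν : 0 < ν) (hℓ : 0 < ℓ) {ξ : EuclideanSpace ℝ (Fin d)} {r : ℝ}
    (hr : 0 < r) (hrξ : r ≤ ‖ξ‖) :
    Chat d ν ℓ ξ ≤ maternCoeff d ν ℓ * (2 * π * ℓ * r) ^ (-(2 * ν + d)) := by
  have hρ : 0 < 2 * π * ℓ * r := by positivity
  have hbase : (2 * π * ℓ * r) ^ 2 ≤ 2 * ν + (2 * π * ℓ) ^ 2 * ‖ξ‖ ^ 2 := by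
    have := mul_le_mul_of_nonneg_left (pow_le_pow_left₀ hr.le hrξ 2) (sq_nonneg (2 * π * ℓ))
    rw [mul_pow]
    linarith
  calc Chat d ν ℓ ξ
      ≤ maternCoeff d ν ℓ * ((2 * π * ℓ * r) ^ 2) ^ (-(ν + (d : ℝ) / 2)) := by
        rw [Chat_eq_maternCoeff_mul]
        exact mul_le_mul_of_nonneg_left (rpow_le_rpow_of_nonpos (by positivity) hbase
          (by linarith [(d.cast_nonneg : (0 : ℝ) ≤ d)])) (maternCoeff_nonneg hν hℓ.le)
    _ = maternCoeff d ν ℓ * (2 * π * ℓ * r) ^ (-(2 * ν + d)) := by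
        rw [← rpow_natCast, ← rpow_mul hρ.le]
        congr 2
        push_cast
        ring

lemma Chat_lpt_le (hν : 0 < ν) (hℓ : 0 < ℓ) {h : ℝ} (hh : 0 < h) {j : Fin d → ℤ}
    (hj : 0 < supNorm j) :
    Chat d ν ℓ (lpt d h j) ≤
      maternCoeff d ν ℓ * (2 * π * ℓ * h) ^ (-(2 * ν + d)) * (supNorm j : ℝ) ^ (-(2 * ν + d)) := by
  have hK : (0 : ℝ) < supNorm j := by exact_mod_cast hj
  calc Chat d ν ℓ (lpt d h j)
      ≤ maternCoeff d ν ℓ * (2 * π * ℓ * (h * supNorm j)) ^ (-(2 * ν + d)) :=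
        Chat_le_of_le_norm hν hℓ (by positivity) (mul_supNorm_le_norm_lpt hh.le j)
    _ = _ := by
        rw [← mul_assoc, mul_rpow (by positivity) hK.le, mul_assoc]
        ring

lemma norm_matern_tail_le (hν : 1 / 2 ≤ ν) (hℓ : 0 < ℓ) {h : ℝ} (hh : 0 < h) {m : ℕ}
    (hm : 1 ≤ m) (x : EuclideanSpace ℝ (Fin d)) :
    ‖(h : ℂ) ^ d * ∑' j : {j : Fin d → ℤ // j ∉ Jm d m},
        (Chat d ν ℓ (lpt d h j.1) : ℂ) *
          Complex.exp (2 * (π : ℂ) * Complex.I * (h : ℂ) * ((∑ i, (j.1 i : ℝ) * x i : ℝ) : ℂ))‖ ≤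
      h ^ d * (maternCoeff d ν ℓ * (2 * π * ℓ * h) ^ (-(2 * ν + d)) *
        (2 * d * 3 ^ (d - 1) / (2 * ν) * (m : ℝ) ^ (-(2 * ν)))) := by
  have hν0 : 0 < ν := by linarith
  set C := maternCoeff d ν ℓ * (2 * π * ℓ * h) ^ (-(2 * ν + d))
  have hnorm : ∀ j : {j : Fin d → ℤ // j ∉ Jm d m},
      ‖(Chat d ν ℓ (lpt d h j.1) : ℂ) *
        Complex.exp (2 * (π : ℂ) * Complex.I * (h : ℂ) * ((∑ i, (j.1 i : ℝ) * x i : ℝ) : ℂ))‖ =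
        Chat d ν ℓ (lpt d h j.1) := by
    intro j
    rw [norm_mul, Complex.norm_real, norm_of_nonneg (Chat_nonneg hν0 hℓ.le _),
      show 2 * (π : ℂ) * Complex.I * (h : ℂ) * ((∑ i, (j.1 i : ℝ) * x i : ℝ) : ℂ) =
        ((2 * π * h * ∑ i, (j.1 i : ℝ) * x i : ℝ) : ℂ) * Complex.I by push_cast; ring,
      Complex.norm_exp_ofReal_mul_I, mul_one]
  have hle : ∀ j : {j : Fin d → ℤ // j ∉ Jm d m},
      Chat d ν ℓ (lpt d h j.1) ≤ C * (supNorm j.1 : ℝ) ^ (-(2 * ν + d)) := fun j =>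
    Chat_lpt_le hν0 hℓ hh (by have := mt mem_Jm_iff.2 j.2; omega)
  have hs : 1 ≤ 2 * ν := by linarith
  have hsum := (summable_rpow_supNorm (d := d) hs hm).mul_left C
  have hsum_norm := hsum.of_nonneg_of_le (fun j => (hnorm j).symm ▸ Chat_nonneg hν0 hℓ.le _)
    (fun j => (hnorm j).symm ▸ hle j)
  rw [norm_mul, norm_pow, Complex.norm_real, norm_of_nonneg hh.le]
  gcongr
  calc _ ≤ _ := norm_tsum_le_tsum_norm hsum_norm
    _ ≤ ∑' j : {j : Fin d → ℤ // j ∉ Jm d m}, C * (supNorm j.1 : ℝ) ^ (-(2 * ν + d)) :=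
        hsum_norm.tsum_le_tsum (fun j => (hnorm j).symm ▸ hle j) hsum
    _ ≤ _ := by
        rw [tsum_mul_left]
        gcongr
        · exact mul_nonneg (maternCoeff_nonneg hν0 hℓ.le) (rpow_nonneg (by positivity) _)
        exact tsum_rpow_supNorm_le hs hm

end Matern

lemma sqrt_pi_mul_Gamma_add_half_le {ν : ℝ} (hν : 1 / 2 ≤ ν) :
    √π * Gamma (ν + 1 / 2) ≤ 2 * ν * Gamma ν := by
  have hν0 : 0 < ν := by linarith
  set t := 1 / (2 * ν)
  have ht0 : 0 ≤ t := by positivity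
  have ht1 : t ≤ 1 := by rw [div_le_one (by linarith)]; linarith
  have hconv := convexOn_log_Gamma.2 (x := 1) (y := ν + 1) (by norm_num)
    (show ν + 1 ∈ Set.Ioi 0 by simp only [Set.mem_Ioi]; linarith)
  have h₁ := hconv ht0 (sub_nonneg.2 ht1) (by ring)
  have h₂ := hconv (sub_nonneg.2 ht1) ht0 (by ring)
  simp only [smul_eq_mul, Function.comp_apply, Gamma_one, log_one, mul_zero, zero_add] at h₁ h₂
  rw [show t * 1 + (1 - t) * (ν + 1) = ν + 1 / 2 by simp only [t]; field_simp; ring] at h₁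
  rw [show (1 - t) * 1 + t * (ν + 1) = 1 / 2 + 1 by simp only [t]; field_simp; ring,
    Gamma_add_one (by norm_num), Gamma_one_half_eq] at h₂
  have hG := Gamma_pos_of_pos (by linarith : 0 < ν + 1 / 2)
  have hprod : Gamma (ν + 1 / 2) * (1 / 2 * √π) ≤ Gamma (ν + 1) := by
    rw [← log_le_log_iff (by positivity) (Gamma_pos_of_pos (by linarith)),
      log_mul hG.ne' (by positivity)]
    linarith
  rw [Gamma_add_one hν0.ne'] at hprod
  linarith

lemma sqrt_pi_mul_Gamma_add_div_two_le {d : ℕ} (hd : d = 1 ∨ d = 2 ∨ d = 3) {ν : ℝ}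
    (hν : 1 / 2 ≤ ν) : √π * Gamma (ν + (d : ℝ) / 2) ≤ √(2 * ν) ^ d * (2 * ν) * Gamma ν := by
  have hν0 : 0 < ν := by linarith
  have hΓ := Gamma_pos_of_pos hν0
  have hs : 1 ≤ √(2 * ν) := one_le_sqrt.2 (by linarith)
  have hs2 : √(2 * ν) ^ 2 = 2 * ν := sq_sqrt (by linarith)
  have hπ : √π ≤ 2 := sqrt_le_iff.2 ⟨by norm_num, by linarith [pi_lt_four]⟩
  have key := sqrt_pi_mul_Gamma_add_half_le hν
  have hνΓ : 0 ≤ 2 * ν * Gamma ν := by positivity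
  rcases hd with rfl | rfl | rfl
  · calc √π * Gamma (ν + ((1 : ℕ) : ℝ) / 2) ≤ 2 * ν * Gamma ν := by simpa using key
      _ ≤ √(2 * ν) ^ 1 * (2 * ν) * Gamma ν := by
        linarith [mul_le_mul_of_nonneg_right hs hνΓ]
  · calc √π * Gamma (ν + ((2 : ℕ) : ℝ) / 2) = √π * (ν * Gamma ν) := by
          rw [show ν + ((2 : ℕ) : ℝ) / 2 = ν + 1 by norm_num, Gamma_add_one hν0.ne']
      _ ≤ 2 * (ν * Gamma ν) := by gcongr
      _ ≤ √(2 * ν) ^ 2 * (2 * ν) * Gamma ν := by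
          rw [hs2]; linarith [mul_le_mul_of_nonneg_right (by linarith : 1 ≤ 2 * ν) hνΓ]
  · calc √π * Gamma (ν + ((3 : ℕ) : ℝ) / 2) = (ν + 1 / 2) * (√π * Gamma (ν + 1 / 2)) := by
          rw [show ν + ((3 : ℕ) : ℝ) / 2 = ν + 1 / 2 + 1 by push_cast; ring,
            Gamma_add_one (by linarith)]; ring
      _ ≤ (2 * ν) * (2 * ν * Gamma ν) := by gcongr; linarith
      _ ≤ √(2 * ν) ^ 3 * (2 * ν) * Gamma ν := by
          rw [pow_succ, hs2]
          linarith [mul_le_mul_of_nonneg_right hs (by positivity : 0 ≤ 2 * ν * (2 * ν * Gamma ν))]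

lemma four_mul_rpow_le_sqrt_pi {ν : ℝ} (hν : 1 / 2 ≤ ν) : 4 * (25 / 128 : ℝ) ^ ν ≤ √π := by
  have hhalf : (25 / 128 : ℝ) ^ ν ≤ (25 / 128 : ℝ) ^ (1 / 2 : ℝ) :=
    rpow_le_rpow_of_exponent_ge (by norm_num) (by norm_num) hν
  rw [← sqrt_eq_rpow] at hhalf
  have : 4 * √(25 / 128) ≤ √π := by
    rw [show (4 : ℝ) = √16 by rw [show (16 : ℝ) = 4 ^ 2 by norm_num, sqrt_sq (by norm_num)],
      ← sqrt_mul (by norm_num)]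
    exact sqrt_le_sqrt (by linarith [pi_gt_d2])
  linarith

lemma pow_mul_maternCoeff_mul_rpow {d : ℕ} {ν ℓ h : ℝ} (hν : 0 < ν) (hℓ : 0 < ℓ) (hh : 0 < h) :
    h ^ d * (maternCoeff d ν ℓ * (2 * π * ℓ * h) ^ (-(2 * ν + d))) =
      (2 * ν) ^ ν * Gamma (ν + (d : ℝ) / 2) / Gamma ν / (π ^ ((d : ℝ) / 2) * √(2 * ν) ^ d) *
        (2 * π * ℓ * h) ^ (-(2 * ν)) := by
  have hT : 0 < 2 * π * ℓ * h := by positivity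
  have hΓ := Gamma_pos_of_pos hν
  have hs : 0 < √(2 * ν) := sqrt_pos.2 (by linarith)
  rw [neg_add, rpow_add hT, rpow_neg hT.le (d : ℝ), rpow_natCast, maternCoeff,
    rpow_div_two_eq_sqrt _ pi_pos.le, rpow_natCast, div_pow]
  have hπ : √π ^ d * √π ^ d = π ^ d := by rw [← mul_pow, mul_self_sqrt pi_pos.le]
  field_simp
  rw [mul_pow, mul_pow, mul_pow, ← hπ]
  ring

lemma rpow_mul_rpow_neg_le_of_le {ν K M : ℝ} (hν : 0 < ν) (hK : 0 < K)
    (hKM : K ^ (1 / (2 * ν)) * (3.2 * √ν) ≤ M) :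
    (2 * ν) ^ ν * M ^ (-(2 * ν)) ≤ (25 / 128 : ℝ) ^ ν * K⁻¹ := by
  have hc : 0 < 3.2 * √ν := by positivity
  have hM' : M ^ (-(2 * ν)) ≤ (K ^ (1 / (2 * ν)) * (3.2 * √ν)) ^ (-(2 * ν)) :=
    rpow_le_rpow_of_nonpos (by positivity) hKM (by linarith)
  have hK' : (K ^ (1 / (2 * ν))) ^ (-(2 * ν)) = K⁻¹ := by
    rw [← rpow_mul hK.le, show 1 / (2 * ν) * -(2 * ν) = -1 by field_simp, rpow_neg_one]
  have hc' : (2 * ν) ^ ν * (3.2 * √ν) ^ (-(2 * ν)) = (25 / 128 : ℝ) ^ ν := by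
    rw [show -(2 * ν) = 2 * -ν by ring, rpow_mul hc.le, rpow_two, mul_pow, sq_sqrt hν.le,
      rpow_neg (by positivity), ← div_eq_mul_inv, ← div_rpow (by positivity) (by positivity)]
    congr 1
    field_simp
    norm_num
  calc (2 * ν) ^ ν * M ^ (-(2 * ν))
      ≤ (2 * ν) ^ ν * (K ^ (1 / (2 * ν)) * (3.2 * √ν)) ^ (-(2 * ν)) := by gcongr
    _ = (25 / 128 : ℝ) ^ ν * K⁻¹ := by
        rw [mul_rpow (by positivity) hc.le, hK', ← hc']; ring

lemma matern_tail_bound_le_half {d m : ℕ} (hd : d = 1 ∨ d = 2 ∨ d = 3) {ν ℓ h ε : ℝ}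
    (hν : 1 / 2 ≤ ν) (hℓ : 0 < ℓ) (hh : 0 < h) (hε : 0 < ε)
    (hm : (d * 5 ^ (d - 1) / (π ^ ((d : ℝ) / 2) * ε)) ^ (1 / (2 * ν)) * (3.2 * √ν) ≤
      2 * π * ℓ * h * m) :
    h ^ d * (maternCoeff d ν ℓ * (2 * π * ℓ * h) ^ (-(2 * ν + d)) *
        (2 * d * 3 ^ (d - 1) / (2 * ν) * (m : ℝ) ^ (-(2 * ν)))) ≤ ε / 2 := by
  have hν0 : 0 < ν := by linarith
  have hd0 : (0 : ℝ) < d := by rcases hd with rfl | rfl | rfl <;> norm_num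
  have hP : 0 < π ^ ((d : ℝ) / 2) := rpow_pos_of_pos pi_pos _
  have hs : 0 < √(2 * ν) := sqrt_pos.2 (by linarith)
  have hΓ := Gamma_pos_of_pos hν0
  have hscale := rpow_mul_rpow_neg_le_of_le hν0 (by positivity) hm
  set A := (25 / 128 : ℝ) ^ ν
  set B := Gamma (ν + (d : ℝ) / 2) / (Gamma ν * (√(2 * ν) ^ d * (2 * ν)))
  have hA : 4 * A ≤ √π := four_mul_rpow_le_sqrt_pi hν
  have hB : √π * B ≤ 1 := by
    rw [← mul_div_assoc, div_le_one (by positivity)]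
    linarith [sqrt_pi_mul_Gamma_add_div_two_le hd hν]
  have h35 : (3 : ℝ) ^ (d - 1) / 5 ^ (d - 1) ≤ 1 :=
    div_le_one_of_le₀ (pow_le_pow_left₀ (by norm_num) (by norm_num) _) (by positivity)
  rw [← mul_assoc, pow_mul_maternCoeff_mul_rpow hν0 hℓ hh]
  calc _ = 2 * ν * B / π ^ ((d : ℝ) / 2) * (2 * d * 3 ^ (d - 1) / (2 * ν)) *
        ((2 * ν) ^ ν * (2 * π * ℓ * h * m) ^ (-(2 * ν))) := by
        rw [mul_rpow (x := 2 * π * ℓ * h) (by positivity) (by positivity)]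
        simp only [B]
        field_simp
    _ ≤ 2 * ν * B / π ^ ((d : ℝ) / 2) * (2 * d * 3 ^ (d - 1) / (2 * ν)) *
        (A * (d * 5 ^ (d - 1) / (π ^ ((d : ℝ) / 2) * ε))⁻¹) := by
        gcongr
    _ = 2 * ε * A * B * (3 ^ (d - 1) / 5 ^ (d - 1)) := by
        field_simp
    _ ≤ ε / 2 := by
        have hAB : 4 * A * B ≤ 1 := by
          nlinarith [mul_le_mul_of_nonneg_right hA (by positivity : 0 ≤ B)]
        have hAB0 : 0 ≤ A * B := by positivity
        nlinarith [mul_le_mul_of_nonneg_left h35 (by positivity : 0 ≤ 2 * ε * A * B)]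

theorem stmt_5 (d : ℕ) (hd : d = 1 ∨ d = 2 ∨ d = 3) (ν : ℝ) (hν : 1 / 2 ≤ ν)
    (ℓ : ℝ) (hℓ0 : 0 < ℓ)
    (h : ℝ) (hh0 : 0 < h)
    (ε : ℝ) (hε : 0 < ε) (m : ℕ)
    (hm : (m : ℝ) ≥ (d * 5 ^ (d - 1) / (Real.pi ^ ((d : ℝ) / 2) * ε)) ^ (1 / (2 * ν)) *
        (1.6 * Real.sqrt ν) / (Real.pi * h * ℓ)) :
    ∀ x : EuclideanSpace ℝ (Fin d),
      ‖(h : ℂ) ^ d * ∑' j : {j : Fin d → ℤ // j ∉ Jm d m},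
          (Chat d ν ℓ (lpt d h j.1) : ℂ) *
            Complex.exp (2 * (Real.pi : ℂ) * Complex.I * (h : ℂ) *
              ((∑ i, (j.1 i : ℝ) * x i : ℝ) : ℂ))‖ ≤ ε / 2 := by
  intro x
  have hd0 : (0 : ℝ) < d := by rcases hd with rfl | rfl | rfl <;> norm_num
  have hlower : 0 < (d * 5 ^ (d - 1) / (π ^ ((d : ℝ) / 2) * ε)) ^ (1 / (2 * ν)) * (3.2 * √ν) := by
    have := rpow_pos_of_pos pi_pos ((d : ℝ) / 2)
    have := sqrt_pos.2 (by linarith : 0 < ν)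
    positivity
  have hM : (d * 5 ^ (d - 1) / (π ^ ((d : ℝ) / 2) * ε)) ^ (1 / (2 * ν)) * (3.2 * √ν) ≤
      2 * π * ℓ * h * m := by
    rw [ge_iff_le, div_le_iff₀ (by positivity)] at hm
    linarith
  have hm1 : 1 ≤ m := Nat.cast_pos.1 (pos_of_mul_pos_right (hlower.trans_le hM) (by positivity))
  exact (norm_matern_tail_le hν hℓ0 hh0 hm1 x).trans
    (matern_tail_bound_le_half hd hν hℓ0 hh0 hε hM)
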